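/- arXiv:1609.03276 — 6 statements merged into one kernel-verified Lean document; each statement's English description precedes it below -/
import Mathlib

section
/- Let R be a commutative ring and let f and g be formal power series over R such that the constant coefficient of f is 0. Then for every natural number n, n! times the n-th coefficient of the substitution subst f g (i.e. of g(f(z))) equals the sum, over all partitions π of the finite set Fin n into nonempty blocks, of ((number of blocks of π)! times the (number of blocks of π)-th coefficient of g) multiplied by the product, over the blocks B of π, of ((card B)! times the (card B)-th coefficient of f). (This is the classical Faà di Bruno formula, the case of the paper's Main Theorem for the terminal reduced operad Comm₊.) -/
/-!
Expand `g(f) = ∑ₖ gₖ fᵏ`. Multiplying out `fᵏ`, the maps `σ : Fin n → Fin k` whose fibres have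
prescribed sizes `c` number `n! / ∏ cᵢ!`, so `n! [zⁿ] fᵏ = ∑_σ ∏ᵢ |σ⁻¹ i|! f_{|σ⁻¹ i|}`.
As `f₀ = 0`, only surjections contribute, and the surjections with a given kernel partition `π`
are the enumerations `Fin k ≃ π.parts`: there are `k!` of them if `π` has `k` blocks, and none
otherwise.
-/

open Finset

/-- Substitution of one formal power series into another: `subst f g` is `g(f(z))`.
This coefficientwise definition agrees with the usual substitution whenever the
constant coefficient of `f` is `0` (so that `f ^ k` has order at least `k`). -/
noncomputable def PowerSeries.subst' {R : Type*} [CommRing R]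
    (f g : PowerSeries R) : PowerSeries R :=
  PowerSeries.mk fun n =>
    ∑ k ∈ Finset.range (n + 1), PowerSeries.coeff k g * PowerSeries.coeff n (f ^ k)

section

variable {α ι : Type*}

def Equiv.equivSigmaEquivFiberwise {β : ι → Type*} :
    (α ≃ Σ i, β i) ≃ Σ σ : α → ι, ∀ i, {x // σ x = i} ≃ β i where
  toFun e := ⟨fun x => (e x).1,
    fun i => (e.subtypeEquiv fun _ => Iff.rfl).trans (Equiv.sigmaSubtype i)⟩
  invFun s := (Equiv.sigmaFiberEquiv s.1).symm.trans (Equiv.sigmaCongrRight s.2)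
  left_inv _ := Equiv.ext fun _ => rfl
  right_inv := by
    rintro ⟨σ, F⟩
    refine Sigma.ext rfl (heq_of_eq ?_)
    funext i
    ext ⟨x, rfl⟩
    rfl

theorem Fintype.card_equiv_eq_ite {γ δ : Type*} [Fintype γ] [Fintype δ] [DecidableEq γ]
    [DecidableEq δ] :
    Fintype.card (γ ≃ δ) =
      if Fintype.card γ = Fintype.card δ then (Fintype.card γ).factorial else 0 := by
  split_ifs with h
  · exact Fintype.card_equiv (Fintype.equivOfCardEq h)
  · exact Fintype.card_eq_zero_iff.mpr ⟨fun e => h (Fintype.card_congr e)⟩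

theorem Function.Surjective.injective_fiber [Fintype α] [DecidableEq ι] {σ : α → ι}
    (hσ : Function.Surjective σ) : Function.Injective fun i => ({x | σ x = i} : Finset α) := by
  intro i j hij
  obtain ⟨x, rfl⟩ := hσ i
  simpa using (Finset.ext_iff.1 hij x).1 (by simp)

variable [Fintype α] [DecidableEq α] [DecidableEq ι]

theorem card_fun_fiber_card_eq_multinomial [Fintype ι] (c : ι → ℕ)
    (hc : ∑ i, c i = Fintype.card α) :
    #{σ : α → ι | ∀ i, #{x | σ x = i} = c i} = Nat.multinomial univ c := by
  have hcount : (∏ i, (c i).factorial) * #{σ : α → ι | ∀ i, #{x | σ x = i} = c i} =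
      (Fintype.card α).factorial := by
    rw [← Fintype.card_equiv (Fintype.equivOfCardEq (β := Σ i, Fin (c i)) (by simp [hc])),
      Fintype.card_congr Equiv.equivSigmaEquivFiberwise, Fintype.card_sigma, card_filter, mul_sum]
    refine sum_congr rfl fun σ _ => ?_
    simp only [Fintype.card_pi, Fintype.card_equiv_eq_ite, Fintype.card_fin, Fintype.card_subtype,
      Fintype.prod_ite_zero, mul_ite, mul_one, mul_zero]
    split_ifs with h
    · exact prod_congr rfl fun i _ => by rw [h]
    · rfl
  have hspec := Nat.multinomial_spec univ c
  rw [hc, ← hcount] at hspec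
  exact (Nat.eq_of_mul_eq_mul_left (by positivity) hspec).symm

theorem PowerSeries.factorial_card_mul_coeff_prod [Fintype ι] {R : Type*} [CommSemiring R]
    (f : ι → PowerSeries R) :
    ((Fintype.card α).factorial : R) * coeff (Fintype.card α) (∏ i, f i) =
      ∑ σ : α → ι, ∏ i, ((#{x | σ x = i}).factorial : R) * coeff #{x | σ x = i} (f i) := by
  let fiberCard (σ : α → ι) : ι →₀ ℕ := Finsupp.equivFunOnFinite.symm fun i => #{x | σ x = i}
  have hmaps : ∀ σ ∈ (univ : Finset (α → ι)),
      fiberCard σ ∈ finsuppAntidiag univ (Fintype.card α) := by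
    intro σ _
    simp [fiberCard, ← card_eq_sum_card_fiberwise (fun x _ => mem_univ (σ x))]
  rw [coeff_prod, mul_sum, ← sum_fiberwise_of_maps_to hmaps]
  refine sum_congr rfl fun l hl => ?_
  have hfiber : ∀ σ : α → ι, fiberCard σ = l ↔ ∀ i, #{x | σ x = i} = l i := by
    simp [fiberCard, Finsupp.ext_iff]
  have hl : ∑ i, l i = Fintype.card α := (mem_finsuppAntidiag.1 hl).1
  rw [filter_congr fun σ _ => hfiber σ,
    sum_congr rfl fun σ hσ => prod_congr rfl fun i _ => by rw [(mem_filter.1 hσ).2 i],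
    sum_const, card_fun_fiber_card_eq_multinomial l hl, nsmul_eq_mul, prod_mul_distrib,
    ← mul_assoc, ← Nat.cast_prod, ← Nat.cast_mul, mul_comm (Nat.multinomial _ _),
    Nat.multinomial_spec, hl]

namespace Finpartition

def ker (σ : α → ι) : Finpartition (univ : Finset α) :=
  letI : DecidableRel (Setoid.ker σ) := fun a b => decEq (σ a) (σ b)
  ofSetoid (Setoid.ker σ)

theorem part_ker (σ : α → ι) (a : α) : (ker σ).part a = ({x | σ x = σ a} : Finset α) := by
  ext x
  simp [ker, mem_part_ofSetoid_iff_rel, eq_comm]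

theorem parts_ker [Fintype ι] {σ : α → ι} (hσ : Function.Surjective σ) :
    (ker σ).parts = univ.image fun i => ({x | σ x = i} : Finset α) := by
  ext B
  simp only [ker, ofSetoid, ofSetSetoid_parts, mem_image, mem_univ, true_and, hσ.exists]
  simp only [Setoid.ker_def, eq_comm]

theorem fiber_mem_parts_ker [Fintype ι] {σ : α → ι} (hσ : Function.Surjective σ) (i : ι) :
    ({x | σ x = i} : Finset α) ∈ (ker σ).parts := by
  rw [parts_ker hσ]
  exact mem_image_of_mem _ (mem_univ i)

variable (π : Finpartition (univ : Finset α))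

def partIndex (e : ι ≃ π.parts) (x : α) : ι := e.symm ⟨π.part x, π.part_mem.2 (mem_univ x)⟩

theorem fiber_partIndex (e : ι ≃ π.parts) (i : ι) :
    ({x | π.partIndex e x = i} : Finset α) = e i := by
  ext x
  simp only [partIndex, mem_filter, mem_univ, true_and, Equiv.symm_apply_eq, Subtype.ext_iff]
  exact π.part_eq_iff_mem (e i).2

theorem surjective_partIndex (e : ι ≃ π.parts) : Function.Surjective (π.partIndex e) := by
  intro i
  obtain ⟨x, hx⟩ := π.nonempty_of_mem_parts (e i).2
  exact ⟨x, by simpa [← fiber_partIndex] using hx⟩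

theorem ker_partIndex [Fintype ι] (e : ι ≃ π.parts) : ker (π.partIndex e) = π := by
  ext B
  rw [parts_ker (π.surjective_partIndex e)]
  simp only [fiber_partIndex, mem_image, mem_univ, true_and]
  exact ⟨by rintro ⟨i, rfl⟩; exact (e i).2, fun hB => ⟨e.symm ⟨B, hB⟩, by simp⟩⟩

noncomputable def surjKerEquiv [Fintype ι] :
    {σ : α → ι // Function.Surjective σ ∧ ker σ = π} ≃ (ι ≃ π.parts) where
  toFun σ := Equiv.ofBijective
    (fun i => ⟨({x | σ.1 x = i} : Finset α), by
      simpa only [σ.2.2] using fiber_mem_parts_ker σ.2.1 i⟩)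
    ⟨fun i j hij => σ.2.1.injective_fiber (congrArg Subtype.val hij), by
      rintro ⟨B, hB⟩
      rw [← σ.2.2, parts_ker σ.2.1, mem_image] at hB
      obtain ⟨i, -, rfl⟩ := hB
      exact ⟨i, rfl⟩⟩
  invFun e := ⟨π.partIndex e, π.surjective_partIndex e, π.ker_partIndex e⟩
  left_inv := by
    rintro ⟨σ, hσ, rfl⟩
    ext x
    simp only [partIndex, Equiv.symm_apply_eq]
    exact Subtype.ext (part_ker σ x)
  right_inv e := Equiv.ext fun i => Subtype.ext (π.fiber_partIndex e i)

theorem card_surjective_ker_eq [Fintype ι] :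
    #{σ : α → ι | Function.Surjective σ ∧ ker σ = π} = Fintype.card (ι ≃ π.parts) := by
  rw [← Fintype.card_subtype, Fintype.card_congr (surjKerEquiv π)]

variable {M : Type*} [CommSemiring M]

theorem prod_fiber_eq_prod_parts_ker [Fintype ι] {σ : α → ι} (hσ : Function.Surjective σ)
    (F : Finset α → M) : ∏ i, F {x | σ x = i} = ∏ B ∈ (ker σ).parts, F B := by
  rw [parts_ker hσ, prod_image fun i _ j _ hij => hσ.injective_fiber hij]

theorem sum_prod_fiber_eq_factorial_smul [Fintype ι] (F : Finset α → M) (hF : F ∅ = 0) :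
    ∑ σ : α → ι, ∏ i, F {x | σ x = i} =
      (Fintype.card ι).factorial • ∑ π : Finpartition (univ : Finset α) with
        #π.parts = Fintype.card ι, ∏ B ∈ π.parts, F B := by
  have hsurj : ∀ σ : α → ι, ¬ Function.Surjective σ → ∏ i, F {x | σ x = i} = 0 := by
    intro σ hσ
    obtain ⟨i, hi⟩ := not_forall.1 hσ
    refine prod_eq_zero (mem_univ i) ?_
    rw [filter_false_of_mem fun x _ hx => hi ⟨x, hx⟩, hF]
  calc ∑ σ : α → ι, ∏ i, F {x | σ x = i}
      = ∑ σ : α → ι with Function.Surjective σ, ∏ i, F {x | σ x = i} :=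
        (sum_filter_of_ne fun σ _ h => not_not.1 (mt (hsurj σ) h)).symm
    _ = ∑ π : Finpartition (univ : Finset α),
          ∑ σ : α → ι with Function.Surjective σ ∧ ker σ = π, ∏ B ∈ π.parts, F B := by
        rw [← sum_fiberwise_of_maps_to (g := ker) fun _ _ => mem_univ _]
        refine sum_congr rfl fun π _ => ?_
        rw [filter_filter]
        refine sum_congr rfl fun σ hσ => ?_
        obtain ⟨hσsurj, rfl⟩ := (mem_filter.1 hσ).2
        exact prod_fiber_eq_prod_parts_ker hσsurj F
    _ = _ := by
        rw [smul_sum, sum_filter]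
        refine sum_congr rfl fun π _ => ?_
        rw [sum_const, card_surjective_ker_eq, Fintype.card_equiv_eq_ite, Fintype.card_coe,
          ite_smul, zero_smul]
        exact if_congr eq_comm rfl rfl

end Finpartition

theorem PowerSeries.factorial_mul_coeff_pow {R : Type*} [CommSemiring R] {f : PowerSeries R}
    (hf : constantCoeff f = 0) (n k : ℕ) :
    (n.factorial : R) * coeff n (f ^ k) =
      k.factorial • ∑ π : Finpartition (univ : Finset (Fin n)) with #π.parts = k,
        ∏ B ∈ π.parts, ((#B).factorial : R) * coeff #B f := by
  simpa using (factorial_card_mul_coeff_prod (α := Fin n) fun _ : Fin k => f).trans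
    (Finpartition.sum_prod_fiber_eq_factorial_smul (fun B => ((#B).factorial : R) * coeff #B f)
      (by simpa using hf))

end

/-- The classical Faà di Bruno formula: `n!` times the `n`-th coefficient of `g(f(z))`
is the sum over all partitions `π` of `Fin n` (into nonempty blocks) of
`(#blocks π)! g_{#blocks π} · ∏_{B ∈ π} (card B)! f_{card B}`. -/
theorem faa_di_bruno_partitions {R : Type*} [CommRing R] (f g : PowerSeries R)
    (hf : PowerSeries.constantCoeff f = 0) (n : ℕ) :
    (n.factorial : R) * PowerSeries.coeff n (PowerSeries.subst' f g) =
      ∑ π : Finpartition (Finset.univ : Finset (Fin n)),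
        ((π.parts.card.factorial : R) * PowerSeries.coeff π.parts.card g) *
          ∏ B ∈ π.parts, ((B.card.factorial : R) * PowerSeries.coeff B.card f) := by
  calc (n.factorial : R) * PowerSeries.coeff n (PowerSeries.subst' f g)
      = ∑ k ∈ range (n + 1),
          PowerSeries.coeff k g * ((n.factorial : R) * PowerSeries.coeff n (f ^ k)) := by
        rw [PowerSeries.subst', PowerSeries.coeff_mk, mul_sum]
        exact sum_congr rfl fun k _ => mul_left_comm _ _ _
    _ = ∑ k ∈ range (n + 1), ∑ π : Finpartition (univ : Finset (Fin n)) with #π.parts = k,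
          ((π.parts.card.factorial : R) * PowerSeries.coeff π.parts.card g) *
            ∏ B ∈ π.parts, ((B.card.factorial : R) * PowerSeries.coeff B.card f) := by
        refine sum_congr rfl fun k _ => ?_
        rw [PowerSeries.factorial_mul_coeff_pow hf, nsmul_eq_mul, mul_sum, mul_sum]
        refine sum_congr rfl fun π hπ => ?_
        rw [(mem_filter.1 hπ).2, mul_assoc, mul_left_comm]
    _ = _ := sum_fiberwise_of_maps_to (fun π _ => mem_range.2 <| Nat.lt_succ_of_le <| by
        simpa using π.card_parts_le_card) _
end

section
/- Let R be a commutative ring and let f and g be formal power series over R such that the constant coefficient of f is 0. Then for every natural number n, the n-th coefficient of subst f g (i.e. of g(f(z))) equals the sum, over all partitions p of the natural number n, of the integer multinomial coefficient k! / ∏_i (mᵢ!) — where k is the number of parts of p counted with multiplicity and mᵢ is the multiplicity of i as a part of p — times the k-th coefficient of g, times the product over the multiset of parts i of p (with multiplicity) of the i-th coefficient of f. (Faà di Bruno's formula in expanded Bell-polynomial form.) -/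
/-!
Truncate `f` to the polynomial `F = ∑_{1 ≤ i ≤ n} f_i X^i`, which does not change the `n`-th
coefficient of any power `f ^ k`. Expanding `F ^ k` by the multinomial theorem, the term indexed
by a multiset `s` of exponents contributes to `X ^ n` exactly when `s` sums to `n`, i.e. when `s`
is a partition of `n` with `k` parts, and it comes with the number of distinct orderings of `s`.
-/

open Finset

/-- Substitution of one formal power series into another: `subst f g` is `g(f(z))`.
This coefficientwise definition agrees with the usual substitution whenever the
constant coefficient of `f` is `0` (so that `f ^ k` has order at least `k`). -/
noncomputable def PowerSeries.substCoeffwise {R : Type*} [CommRing R]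
    (f g : PowerSeries R) : PowerSeries R :=
  PowerSeries.mk fun n =>
    ∑ k ∈ Finset.range (n + 1), PowerSeries.coeff k g * PowerSeries.coeff n (f ^ k)

lemma Multiset.countPerms_eq_multinomial {α : Type*} [DecidableEq α] (m : Multiset α) :
    m.countPerms = Nat.multinomial m.toFinset fun a => m.count a := by
  rw [Multiset.countPerms, Finsupp.multinomial_eq, Multiset.toFinsupp_support]
  exact Nat.multinomial_congr fun a _ => Multiset.toFinsupp_apply m a

lemma Nat.Partition.card_parts_le {n : ℕ} (p : n.Partition) : p.parts.card ≤ n := by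
  simpa [p.parts_sum] using Multiset.card_nsmul_le_sum fun _ hi => p.parts_pos hi

lemma Nat.Partition.sum_eq_sum_sym {M : Type*} [AddCommMonoid M] (n : ℕ)
    (φ : ℕ → Multiset ℕ → M) :
    ∑ k ∈ range (n + 1), ∑ s ∈ (Icc 1 n).sym k with s.val.sum = n, φ k s.val =
      ∑ p : n.Partition, φ p.parts.card p.parts := by
  rw [sum_sigma']
  refine sum_bij' (fun x hx => ⟨x.2, fun hi => ?_, (mem_filter.mp (mem_sigma.mp hx).2).2⟩)
    (fun p _ => ⟨p.parts.card, ⟨p.parts, rfl⟩⟩) (fun _ _ => mem_univ _) (fun p _ => ?_)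
    (fun ⟨_, _, hs⟩ _ => by subst hs; rfl) (fun _ _ => rfl) fun x _ => ?_
  · obtain ⟨-, hx⟩ := mem_sigma.mp hx
    exact (mem_Icc.mp ((mem_sym_iff.mp (mem_filter.mp hx).1) _ hi)).1
  · refine mem_sigma.mpr ⟨mem_range.mpr (Nat.lt_succ_of_le p.card_parts_le),
      mem_filter.mpr ⟨mem_sym_iff.mpr fun i hi => ?_, p.parts_sum⟩⟩
    exact mem_Icc.mpr ⟨p.parts_pos hi, p.le_of_mem_parts hi⟩
  · exact congrArg (φ · _) x.2.2.symm

namespace PowerSeries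

variable {R : Type*}

lemma multiset_prod_C_mul_X_pow [CommSemiring R] (a : ℕ → R) (s : Multiset ℕ) :
    (s.map fun i => C (a i) * X ^ i).prod = C (s.map a).prod * X ^ s.sum := by
  induction s using Multiset.induction with
  | empty => simp
  | cons i s ih =>
    simp only [Multiset.map_cons, Multiset.prod_cons, Multiset.sum_cons, ih, map_mul, pow_add]
    ring

lemma coeff_sum_C_mul_X_pow_pow [CommSemiring R] (S : Finset ℕ) (a : ℕ → R) (k n : ℕ) :
    coeff n ((∑ i ∈ S, C (a i) * X ^ i) ^ k) =
      ∑ s ∈ S.sym k with s.val.sum = n, (s.val.countPerms : R) * (s.val.map a).prod := by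
  rw [sum_pow, map_sum, sum_filter]
  refine sum_congr rfl fun s _ => ?_
  rw [multiset_prod_C_mul_X_pow, ← map_natCast C, ← mul_assoc, ← map_mul, coeff_C_mul_X_pow]
  simp only [eq_comm]

lemma coeff_pow_eq_of_forall_coeff_eq [CommRing R] {f F : R⟦X⟧} {n : ℕ}
    (h : ∀ m ≤ n, coeff m f = coeff m F) (k : ℕ) : coeff n (f ^ k) = coeff n (F ^ k) := by
  have hdvd : X ^ (n + 1) ∣ f - F :=
    X_pow_dvd_iff.mpr fun m hm => by rw [map_sub, h m (by omega), sub_self]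
  rw [← sub_eq_zero, ← map_sub]
  exact X_pow_dvd_iff.mp (hdvd.trans (sub_dvd_pow_sub_pow f F k)) n n.lt_succ_self

lemma coeff_eq_coeff_sum_Icc [Semiring R] {f : R⟦X⟧} (hf : constantCoeff f = 0) {m n : ℕ}
    (hm : m ≤ n) : coeff m f = coeff m (∑ i ∈ Icc 1 n, C (coeff i f) * X ^ i) := by
  simp only [map_sum, coeff_C_mul_X_pow, sum_ite_eq, mem_Icc]
  rcases m.eq_zero_or_pos with rfl | hpos
  · simp [hf]
  · simp [hm, Nat.one_le_iff_ne_zero.mpr hpos.ne']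

end PowerSeries

open PowerSeries in
/-- Faà di Bruno's formula in expanded Bell-polynomial form: the `n`-th coefficient of
`g(f(z))` is the sum over all partitions `p` of the natural number `n` of the
multinomial coefficient `k! / ∏ᵢ mᵢ!` (where `k` is the number of parts of `p` and `mᵢ`
is the multiplicity of `i` among the parts) times `g_k` times `∏` of `f_i` over the
parts `i` of `p` (with multiplicity). -/
theorem faa_di_bruno_nat_partitions {R : Type*} [CommRing R] (f g : PowerSeries R)
    (hf : PowerSeries.constantCoeff f = 0) (n : ℕ) :
    PowerSeries.coeff n (PowerSeries.substCoeffwise f g) =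
      ∑ p : n.Partition,
        ((Nat.multinomial p.parts.toFinset fun i => p.parts.count i : ℕ) : R) *
          PowerSeries.coeff p.parts.card g *
          (p.parts.map fun i => PowerSeries.coeff i f).prod := by
  simp_rw [← Multiset.countPerms_eq_multinomial]
  refine Eq.trans ?_ (Nat.Partition.sum_eq_sum_sym n fun k s =>
    (s.countPerms : R) * coeff k g * (s.map fun i => coeff i f).prod)
  rw [substCoeffwise, coeff_mk]
  refine sum_congr rfl fun k _ => ?_
  rw [coeff_pow_eq_of_forall_coeff_eq (fun _ => coeff_eq_coeff_sum_Icc hf),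
    coeff_sum_C_mul_X_pow_pow, mul_sum]
  exact sum_congr rfl fun s _ => by ring
end

section
/- Let R be a (possibly noncommutative) ring, let a : ℕ → R satisfy a(0) = 0, and let b : ℕ → R. Let f be the formal power series over R with n-th coefficient a(n). Then for every n ≥ 1, the n-th coefficient of the power series Σ_{k=0}^{n} C(b(k)) · f^k (where C embeds ring elements as constant power series) equals the sum, over all compositions (c₁,…,c_k) of n, of the ordered product b(k) · a(c₁) · a(c₂) ⋯ a(c_k). (This is the noncommutative Faà di Bruno formula of Brouder–Frabetti–Krattenthaler, arising from the paper's result applied to the terminal reduced nonsymmetric operad.) -/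
/-!
Write `f = mk a`. In `f ^ (k + 1) = f * f ^ k` the coefficient of `zⁿ` is the sum of
`a i * [zʲ] f ^ k` over `i + j = n`. Because `a 0 = 0`, only the terms with `i > 0` contribute,
and prepending `i` as a first block matches them bijectively with the compositions of `n`
into `k + 1` blocks. So `[zⁿ] f ^ k` is the sum of `a c₁ ⋯ a c_k` over the compositions of `n`
into `k` blocks. No composition of `n` has more than `n` blocks, so summing against `b k` for
`k ≤ n` regroups all compositions of `n` by their length.
-/

open Finset PowerSeries

namespace Composition

def cons {m n : ℕ} (i : ℕ) (hi : 0 < i) (c : Composition m) (h : i + m = n) : Composition n where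
  blocks := i :: c.blocks
  blocks_pos := by
    rintro j (_ | ⟨_, hj⟩)
    exacts [hi, c.blocks_pos hj]
  blocks_sum := by rw [List.sum_cons, c.blocks_sum, h]

@[simp]
theorem cons_blocks {m n i : ℕ} (hi : 0 < i) (c : Composition m) (h : i + m = n) :
    (cons i hi c h).blocks = i :: c.blocks := rfl

@[simp]
theorem cons_length {m n i : ℕ} (hi : 0 < i) (c : Composition m) (h : i + m = n) :
    (cons i hi c h).length = c.length + 1 := by
  simp [Composition.length]

theorem eq_ones_zero (c : Composition 0) : c = ones 0 :=
  eq_ones_iff_le_length.2 c.length.zero_le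

theorem sum_filter_length_succ {M : Type*} [AddCommMonoid M] (n k : ℕ) (F : List ℕ → M) :
    ∑ c : Composition n with c.length = k + 1, F c.blocks =
      ∑ p ∈ antidiagonal n with 0 < p.1,
        ∑ c : Composition p.2 with c.length = k, F (p.1 :: c.blocks) := by
  rw [sum_sigma']
  symm
  refine sum_bij (fun x hx => cons x.1.1 (mem_filter.1 (mem_sigma.1 hx).1).2 x.2
      (mem_antidiagonal.1 (mem_filter.1 (mem_sigma.1 hx).1).1)) ?_ ?_ ?_ (fun _ _ => rfl)
  · intro x hx
    simpa using (mem_sigma.1 hx).2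
  · rintro ⟨⟨i, j⟩, c⟩ hx ⟨⟨i', j'⟩, c'⟩ hx' h
    obtain ⟨rfl, hblocks⟩ := List.cons_eq_cons.1 (congrArg blocks h)
    obtain rfl : j = j' := c.blocks_sum.symm.trans (hblocks ▸ c'.blocks_sum)
    obtain rfl : c = c' := Composition.ext hblocks
    rfl
  · intro c hc
    obtain ⟨i, t, hblocks⟩ := List.exists_cons_of_length_eq_add_one
      (c.blocks_length.trans (mem_filter.1 hc).2)
    have hi : 0 < i := c.blocks_pos (by simp [hblocks])
    refine ⟨⟨(i, t.sum), ⟨t, fun hj => c.blocks_pos (by simp [hblocks, hj]), rfl⟩⟩, ?_,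
      Composition.ext (by simp [hblocks])⟩
    have hsum := c.blocks_sum
    have hlen := c.blocks_length.trans (mem_filter.1 hc).2
    simp only [hblocks, List.sum_cons, List.length_cons] at hsum hlen
    simp [hi, hsum, Composition.length, Nat.succ_injective hlen]

end Composition

theorem PowerSeries.coeff_mk_pow {R : Type*} [Ring R] {a : ℕ → R} (ha : a 0 = 0) (k n : ℕ) :
    coeff n (mk a ^ k) = ∑ c : Composition n with c.length = k, (c.blocks.map a).prod := by
  induction k generalizing n with
  | zero =>
    rcases n.eq_zero_or_pos with rfl | hn
    · simp [filter_true_of_mem, Composition.eq_ones_zero, composition_card]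
    · have hlen (c : Composition n) : c.length ≠ 0 := c.length_pos_of_pos hn |>.ne'
      simp [coeff_one, hn.ne', hlen]
  | succ k ih =>
    rw [pow_succ', coeff_mul, Composition.sum_filter_length_succ n k fun l => (l.map a).prod]
    rw [← sum_filter_of_ne (p := fun p => 0 < p.1)
      fun p _ h => Nat.pos_of_ne_zero fun hp => h (by simp [hp, ha])]
    simp [ih, mul_sum]

theorem noncommutative_faa_di_bruno_general {R : Type*} [Ring R] (a b : ℕ → R) (ha : a 0 = 0)
    (n : ℕ) :
    PowerSeries.coeff n
        (∑ k ∈ Finset.range (n + 1), PowerSeries.C (b k) * PowerSeries.mk a ^ k) =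
      ∑ c : Composition n, b c.length * (c.blocks.map a).prod := by
  simp only [map_sum, coeff_C_mul, coeff_mk_pow ha, mul_sum]
  rw [← sum_fiberwise_of_maps_to (g := Composition.length) (t := range (n + 1))
    fun c _ => mem_range.2 (Nat.lt_succ_of_le c.length_le)]
  exact sum_congr rfl fun k _ => sum_congr rfl fun c hc => by rw [(mem_filter.1 hc).2]

/-- The noncommutative Faà di Bruno formula of Brouder–Frabetti–Krattenthaler: over a
possibly noncommutative ring, for `f = Σ a(n) zⁿ` with `a 0 = 0`, the `n`-th coefficient
(`n ≥ 1`) of `Σ_{k=0}^{n} b(k) · f^k` is the sum over all compositions `(c₁,…,c_k)` of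
`n` of the ordered product `b(k) · a(c₁) ⋯ a(c_k)`. -/
theorem noncommutative_faa_di_bruno {R : Type*} [Ring R] (a b : ℕ → R) (ha : a 0 = 0)
    (n : ℕ) (hn : 1 ≤ n) :
    PowerSeries.coeff n
        (∑ k ∈ Finset.range (n + 1), PowerSeries.C (b k) * PowerSeries.mk a ^ k) =
      ∑ c : Composition n, b c.length * (c.blocks.map a).prod :=
  noncommutative_faa_di_bruno_general a b ha n
end

section
/- Let R be a commutative ring and let f and g be formal power series over R such that the constant coefficient of f is 0. Then for every natural number n, the n-th coefficient of subst f g (i.e. of g(f(z))) equals the sum, over all compositions c of n, of the (length of c)-th coefficient of g multiplied by the product, over the blocks cᵢ of c, of the cᵢ-th coefficient of f. -/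
/-!
Expanding `g(f) = ∑ₖ gₖ fᵏ`, the coefficient of `zⁿ` in `fᵏ` is the sum of `f_{i₁} ⋯ f_{iₖ}` over
the tuples `(i₁, …, iₖ)` with sum `n`. Since `f₀ = 0`, only tuples with positive entries
contribute, and these are exactly the blocks of the compositions of `n` of length `k`.
-/

open Finset

namespace List

theorem prod_range_length_toFinsupp {M N : Type*} [Zero M] [CommMonoid N] (l : List M)
    [DecidablePred (l.getD · 0 ≠ 0)] (g : M → N) :
    ∏ i ∈ Finset.range l.length, g (l.toFinsupp i) = (l.map g).prod := by
  rw [Finset.prod_range, ← Fin.prod_univ_fun_getElem]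
  simp only [toFinsupp_apply_fin, Fin.getElem_fin]

theorem sum_range_length_toFinsupp {M : Type*} [AddCommMonoid M] (l : List M)
    [DecidablePred (l.getD · 0 ≠ 0)] :
    ∑ i ∈ Finset.range l.length, l.toFinsupp i = l.sum := by
  rw [Finset.sum_range, ← Fin.sum_univ_getElem]
  simp only [toFinsupp_apply_fin, Fin.getElem_fin]

end List

namespace Composition

variable {n : ℕ}

theorem support_toFinsupp_blocks (c : Composition n) :
    c.blocks.toFinsupp.support = range c.length := by
  rw [List.toFinsupp_support, filter_true_of_mem]
  intro i hi
  rw [List.getD_eq_getElem _ _ (mem_range.1 hi)]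
  exact (c.blocks_pos (List.getElem_mem _)).ne'

theorem toFinsupp_blocks_injective :
    Function.Injective fun c : Composition n => c.blocks.toFinsupp := by
  intro c d h
  have hlen : c.length = d.length := by
    simpa using congrArg Finset.card
      (c.support_toFinsupp_blocks.symm.trans ((congrArg Finsupp.support h).trans
        d.support_toFinsupp_blocks))
  ext1
  refine List.ext_getElem hlen fun i hc hd => ?_
  rw [← List.toFinsupp_apply_lt _ _ hc, ← List.toFinsupp_apply_lt _ _ hd]
  exact DFunLike.congr_fun h i

theorem image_toFinsupp_blocks_of_length_eq (k : ℕ) :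
    ({c | c.length = k} : Finset (Composition n)).image (fun c => c.blocks.toFinsupp) =
      {l ∈ finsuppAntidiag (range k) n | ∀ i ∈ range k, l i ≠ 0} := by
  ext l
  simp only [mem_image, mem_filter, mem_univ, true_and, mem_finsuppAntidiag]
  constructor
  · rintro ⟨c, rfl, rfl⟩
    refine ⟨⟨by rw [List.sum_range_length_toFinsupp, c.blocks_sum],
      c.support_toFinsupp_blocks.le⟩, fun i hi => ?_⟩
    rw [← Finsupp.mem_support_iff, c.support_toFinsupp_blocks]
    exact hi
  · rintro ⟨⟨hsum, hsupp⟩, hpos⟩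
    refine ⟨⟨List.ofFn fun i : Fin k => l i, ?_, ?_⟩, List.length_ofFn, ?_⟩
    · simp only [List.mem_ofFn]
      rintro _ ⟨i, rfl⟩
      exact Nat.pos_of_ne_zero (hpos i (mem_range.2 i.2))
    · rw [List.sum_ofFn, ← Finset.sum_range (fun i => l i), hsum]
    · ext i
      by_cases hi : i < k
      · rw [List.toFinsupp_apply_lt _ _ (by simpa using hi)]
        simp
      · rw [List.toFinsupp_apply_le _ _ (by simpa using hi)]
        exact (Finsupp.notMem_support_iff.1 fun h => hi (mem_range.1 (hsupp h))).symm

end Composition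

namespace PowerSeries

variable {R : Type*} [CommSemiring R]

theorem coeff_pow_of_constantCoeff_eq_zero {f : PowerSeries R} (hf : constantCoeff f = 0)
    (n k : ℕ) :
    coeff n (f ^ k) = ∑ l ∈ finsuppAntidiag (range k) n with ∀ i ∈ range k, l i ≠ 0,
      ∏ i ∈ range k, coeff (l i) f := by
  rw [coeff_pow, sum_filter_of_ne]
  intro l _ hl i hi hli
  exact hl (prod_eq_zero hi (by rw [hli, coeff_zero_eq_constantCoeff_apply, hf]))

theorem coeff_pow_eq_sum_compositions {f : PowerSeries R} (hf : constantCoeff f = 0)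
    (n k : ℕ) :
    coeff n (f ^ k) = ∑ c : Composition n with c.length = k,
      (c.blocks.map fun i => coeff i f).prod := by
  rw [coeff_pow_of_constantCoeff_eq_zero hf, ← Composition.image_toFinsupp_blocks_of_length_eq,
    sum_image Composition.toFinsupp_blocks_injective.injOn]
  refine sum_congr rfl fun c hc => ?_
  rw [← (mem_filter.1 hc).2]
  exact c.blocks.prod_range_length_toFinsupp fun i => coeff i f

end PowerSeries

/-- The `n`-th coefficient of `g(f(z))` is the sum over all compositions `c` of `n`
of `g_{length c} · ∏ᵢ f_{cᵢ}`. -/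
theorem faa_di_bruno_compositions {R : Type*} [CommRing R] (f g : PowerSeries R)
    (hf : PowerSeries.constantCoeff f = 0) (n : ℕ) :
    PowerSeries.coeff n (PowerSeries.subst' f g) =
      ∑ c : Composition n,
        PowerSeries.coeff c.length g *
          (c.blocks.map fun i => PowerSeries.coeff i f).prod := by
  rw [PowerSeries.subst', PowerSeries.coeff_mk,
    ← sum_fiberwise_of_maps_to (g := Composition.length)
      fun c _ => mem_range.2 (Nat.lt_succ_of_le c.length_le)]
  refine sum_congr rfl fun k _ => ?_
  rw [PowerSeries.coeff_pow_eq_sum_compositions hf, mul_sum]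
  refine sum_congr rfl fun c hc => ?_
  rw [(mem_filter.1 hc).2]
end

section
/- Let R be a commutative ring and let f be a formal power series over R with constant coefficient 0. Then for all natural numbers k and n, the n-th coefficient of f^k equals the sum, over all compositions c of n of length exactly k, of the product over the blocks cᵢ of c of the cᵢ-th coefficient of f. (This identity computes the coefficients of the k-th power G^k appearing in the Faà di Bruno formula.) -/
/-!
Expanding `f ^ k` writes its `n`-th coefficient as a sum, over the `x : ℕ →₀ ℕ` supported in
`{0, …, k - 1}` with total `n`, of `∏ i < k, coeff (x i) f`. As `coeff 0 f = 0`, only the `x`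
with `x i ≠ 0` for all `i < k` contribute, and these are exactly the block sequences
`i ↦ cᵢ` of the compositions `c` of `n` of length `k`.
-/

open Finset

theorem List.prod_map_eq_prod_range_toFinsupp {M N : Type*} [CommMonoid M] [Zero N]
    [DecidableEq N] (l : List N) (g : N → M) :
    (l.map g).prod = ∏ i ∈ Finset.range l.length, g (l.toFinsupp i) := by
  rw [Finset.prod_range, ← List.prod_ofFn]
  congr 1
  apply List.ext_getElem <;> simp

theorem List.sum_range_toFinsupp {M : Type*} [AddCommMonoid M] [DecidableEq M] (l : List M) :
    ∑ i ∈ Finset.range l.length, l.toFinsupp i = l.sum := by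
  rw [Finset.sum_range, ← List.sum_ofFn]
  congr 1
  apply List.ext_getElem <;> simp

namespace Composition

variable {n : ℕ}

theorem toFinsupp_blocks_apply_ne_zero (c : Composition n) {i : ℕ} (hi : i < c.length) :
    c.blocks.toFinsupp i ≠ 0 := by
  rw [List.toFinsupp_apply_lt (hn := hi)]
  exact (c.blocks_pos (List.getElem_mem _)).ne'

theorem toFinsupp_blocks_mem_finsuppAntidiag (c : Composition n) :
    c.blocks.toFinsupp ∈ finsuppAntidiag (range c.length) n :=
  mem_finsuppAntidiag.mpr ⟨c.blocks.sum_range_toFinsupp.trans c.blocks_sum,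
    c.support_toFinsupp_blocks.subset⟩

theorem exists_toFinsupp_blocks_eq {k : ℕ} {x : ℕ →₀ ℕ}
    (hx : x ∈ finsuppAntidiag (range k) n) (hpos : ∀ i ∈ range k, x i ≠ 0) :
    ∃ c : Composition n, c.length = k ∧ c.blocks.toFinsupp = x := by
  obtain ⟨hsum, hsupp⟩ := mem_finsuppAntidiag.mp hx
  set l := (List.range k).map x
  have hl : l.toFinsupp = x := by
    ext i
    by_cases hi : i < k
    · simp [l, hi]
    · have : i ∉ x.support := fun h => hi (mem_range.mp (hsupp h))
      simp [l, not_lt.mp hi, Finsupp.notMem_support_iff.mp this]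
  refine ⟨⟨l, fun hi => ?_, ?_⟩, by simp [l, Composition.length], hl⟩
  · obtain ⟨i, hik, rfl⟩ := List.mem_map.mp hi
    exact Nat.pos_of_ne_zero (hpos i (by simpa using hik))
  · simpa [l, hl, hsum] using l.sum_range_toFinsupp.symm

theorem map_toFinsupp_blocks_filter_length_eq (k : ℕ) :
    (univ.filter fun c : Composition n => c.length = k).map
        ⟨fun c => c.blocks.toFinsupp, toFinsupp_blocks_injective⟩ =
      (finsuppAntidiag (range k) n).filter fun x => ∀ i ∈ range k, x i ≠ 0 := by
  ext x
  simp only [mem_map, mem_filter, mem_univ, true_and, Function.Embedding.coeFn_mk]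
  constructor
  · rintro ⟨c, rfl, rfl⟩
    exact ⟨c.toFinsupp_blocks_mem_finsuppAntidiag,
      fun i hi => c.toFinsupp_blocks_apply_ne_zero (mem_range.mp hi)⟩
  · rintro ⟨hx, hpos⟩
    exact exists_toFinsupp_blocks_eq hx hpos

end Composition

/-- The `n`-th coefficient of the `k`-th power of a power series `f` with zero constant
coefficient is the sum over all compositions `c` of `n` of length exactly `k` of
`∏ᵢ f_{cᵢ}`. -/
theorem coeff_pow_eq_sum_compositions {R : Type*} [CommRing R] (f : PowerSeries R)
    (hf : PowerSeries.constantCoeff f = 0) (k n : ℕ) :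
    PowerSeries.coeff n (f ^ k) =
      ∑ c ∈ Finset.univ.filter (fun c : Composition n => c.length = k),
        (c.blocks.map fun i => PowerSeries.coeff i f).prod := by
  have hvanish : ∀ x ∈ finsuppAntidiag (range k) n,
      ∏ i ∈ range k, PowerSeries.coeff (x i) f ≠ 0 → ∀ i ∈ range k, x i ≠ 0 := by
    intro x _ hprod i hi hxi
    exact hprod (prod_eq_zero hi (by rw [hxi, PowerSeries.coeff_zero_eq_constantCoeff, hf]))
  rw [PowerSeries.coeff_pow, ← sum_filter_of_ne hvanish,
    ← Composition.map_toFinsupp_blocks_filter_length_eq, sum_map]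
  refine sum_congr rfl fun c hc => ?_
  rw [List.prod_map_eq_prod_range_toFinsupp, ← (mem_filter.mp hc).2]
  rfl
end

section
/- Let R be a commutative ring and x : ℕ → R a function. Then for all natural numbers n and k, the sum, over all compositions c = (c₁,…,c_k) of n of length exactly k, of the integer multinomial coefficient n!/(c₁!⋯c_k!) times the product x(c₁)⋯x(c_k), equals k! times the sum, over all partitions π of the finite set Fin n with exactly k blocks, of the product over the blocks B of π of x(card B). (This identity relates the ordered, composition-indexed expansion of the k-th power of a series to the unordered, partition-indexed sum, and accounts for the symmetry factor k! in the Faà di Bruno formula Δ(A) = Σ_k A^k ⊗ A_k/k!.) -/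
/-!
Both sides equal the sum of `∏ᵢ x #f⁻¹(i)` over the surjections `f : Fin n → Fin k`.

Grouping the surjections by the list of their fiber sizes gives the left side: `Perm (Fin n)`
acts on maps by precomposition, the orbit of `f` consists of the maps with the same fiber sizes
`c`, and its stabilizer is `∏ᵢ Perm f⁻¹(i)`, so by orbit–stabilizer there are `n!/(c₁!⋯c_k!)`
of them. Grouping the surjections by their partition into fibers gives the right side: the
surjections whose fibers are the blocks of `π` are the maps `e ∘ (a ↦ block of a)` with
`e : π.parts ≃ Fin k`, so there are `k!` of them.
-/

open Finset Equiv
open scoped Nat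

section FiberCount

variable {α ι : Type*} [Fintype α] [DecidableEq ι]

theorem exists_perm_comp_eq_iff_card_fiber_eq {f g : α → ι} :
    (∃ σ : Perm α, f ∘ σ = g) ↔ ∀ i, #{a | g a = i} = #{a | f a = i} := by
  constructor
  · rintro ⟨σ, rfl⟩ i
    exact card_bij (fun a _ => σ a) (by simp) (by simp)
      fun b hb => ⟨σ.symm b, by simpa using hb, by simp⟩
  · intro h
    refine ⟨ofFiberEquiv fun i => Fintype.equivOfCardEq ?_, funext (ofFiberEquiv_map _)⟩
    simp only [Fintype.card_subtype, h]

theorem card_same_fiber_card_mul_prod_factorial [DecidableEq α] [Fintype ι] (f : α → ι) :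
    #{g : α → ι | ∀ i, #{a | g a = i} = #{a | f a = i}} * ∏ i, (#{a | f a = i})! =
      (Fintype.card α)! := by
  have hstab :
      Nat.card (MulAction.stabilizer (Perm α)ᵈᵐᵃ f) = ∏ i, (#{a | f a = i})! := by
    rw [Nat.card_congr MulOpposite.opEquiv,
      Nat.card_congr (DomMulAct.stabilizerMulEquiv f).toEquiv, Nat.card_pi]
    simp [Nat.card_eq_fintype_card, Fintype.card_perm, Fintype.card_subtype]
  have horbit :
      MulAction.orbit (Perm α)ᵈᵐᵃ f = {g | ∀ i, #{a | g a = i} = #{a | f a = i}} := by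
    ext g
    rw [Set.mem_ofPred_eq, ← exists_perm_comp_eq_iff_card_fiber_eq]
    exact ⟨fun ⟨σ, hσ⟩ => ⟨DomMulAct.mk.symm σ, hσ⟩, fun ⟨σ, hσ⟩ => ⟨DomMulAct.mk σ, hσ⟩⟩
  have hcount := Nat.card_congr (MulAction.orbitProdStabilizerEquivGroup (Perm α)ᵈᵐᵃ f)
  rw [Nat.card_prod, hstab, horbit, Nat.card_congr DomMulAct.mk.symm, Nat.card_perm] at hcount
  simpa [Nat.card_eq_fintype_card, Fintype.card_subtype] using hcount

end FiberCount

section Compositions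

variable {n k : ℕ}

def fiberCards (f : Fin n → Fin k) : List ℕ := List.ofFn fun i => #{a | f a = i}

theorem prod_map_fiberCards {M : Type*} [CommMonoid M] (g : ℕ → M) (f : Fin n → Fin k) :
    ((fiberCards f).map g).prod = ∏ i, g #{a | f a = i} := by
  rw [fiberCards, List.map_ofFn, List.prod_ofFn]
  rfl

theorem surjective_of_fiberCards_eq_blocks {f : Fin n → Fin k} {c : Composition n}
    (h : fiberCards f = c.blocks) : Function.Surjective f := by
  intro i
  have hpos : 0 < #{a | f a = i} := c.blocks_pos (h ▸ List.mem_ofFn.2 ⟨i, rfl⟩)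
  obtain ⟨a, ha⟩ := card_pos.1 hpos
  exact ⟨a, (mem_filter.1 ha).2⟩

theorem exists_composition_of_surjective {f : Fin n → Fin k} (hf : Function.Surjective f) :
    ∃ c : Composition n, c.length = k ∧ c.blocks = fiberCards f := by
  refine ⟨⟨fiberCards f, ?_, ?_⟩, by simp [Composition.length, fiberCards], rfl⟩
  · simp only [fiberCards, List.mem_ofFn, forall_exists_index, forall_apply_eq_imp_iff,
      card_pos]
    intro i
    obtain ⟨a, rfl⟩ := hf i
    exact ⟨a, by simp⟩
  · rw [fiberCards, List.sum_ofFn, ← card_eq_sum_card_fiberwise (fun _ _ => mem_univ _),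
      card_univ, Fintype.card_fin]

theorem fiberCards_index (c : Composition n) : fiberCards c.index = c.blocks := by
  rw [fiberCards, ← c.ofFn_blocksFun]
  congr 1
  funext i
  have hfiber : ({a | c.index a = i} : Finset (Fin n)) = univ.map (c.embedding i).toEmbedding := by
    ext a
    simp [eq_comm, ← c.mem_range_embedding_iff']
  rw [hfiber, card_map, card_univ, Fintype.card_fin]

theorem card_fiberCards_eq_blocks_mul_prod_factorial (c : Composition n) :
    #{f : Fin n → Fin c.length | fiberCards f = c.blocks} * (c.blocks.map Nat.factorial).prod =
      n ! := by
  have h := card_same_fiber_card_mul_prod_factorial c.index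
  rw [Fintype.card_fin] at h
  rw [← h, ← fiberCards_index c, prod_map_fiberCards]
  congr 2
  ext f
  simp only [mem_filter, mem_univ, true_and, fiberCards, List.ofFn_inj, funext_iff]

theorem sum_compositions_eq_sum_surjective {R : Type*} [CommSemiring R] (x : ℕ → R) :
    ∑ c ∈ univ.filter (fun c : Composition n => c.length = k),
        ((n.factorial / (c.blocks.map Nat.factorial).prod : ℕ) : R) * (c.blocks.map x).prod =
      ∑ f ∈ univ.filter (fun f : Fin n → Fin k => Function.Surjective f),
        ∏ i, x #{a | f a = i} := by
  have hmaps : ∀ f ∈ univ.filter (fun f : Fin n → Fin k => Function.Surjective f),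
      fiberCards f ∈
        (univ.filter fun c : Composition n => c.length = k).image Composition.blocks := by
    intro f hf
    obtain ⟨c, hc, hcf⟩ := exists_composition_of_surjective (mem_filter.1 hf).2
    exact mem_image.2 ⟨c, mem_filter.2 ⟨mem_univ c, hc⟩, hcf⟩
  rw [← sum_fiberwise_of_maps_to hmaps, sum_image fun _ _ _ _ h => Composition.ext h]
  refine sum_congr rfl fun c hc => ?_
  obtain rfl : c.length = k := (mem_filter.1 hc).2
  have hsurj : {f ∈ univ.filter (fun f : Fin n → Fin c.length => Function.Surjective f) |
      fiberCards f = c.blocks} = univ.filter fun f => fiberCards f = c.blocks := by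
    ext f
    simp only [mem_filter, mem_univ, true_and, and_iff_right_iff_imp]
    exact surjective_of_fiberCards_eq_blocks
  have hterm : ∀ f ∈ univ.filter fun f : Fin n → Fin c.length => fiberCards f = c.blocks,
      ∏ i, x #{a | f a = i} = (c.blocks.map x).prod := by
    intro f hf
    rw [← (mem_filter.1 hf).2, prod_map_fiberCards]
  have hcard : n ! / (c.blocks.map Nat.factorial).prod =
      #(univ.filter fun f : Fin n → Fin c.length => fiberCards f = c.blocks) :=
    Nat.div_eq_of_eq_mul_left (List.prod_pos fun _ hm => by
        obtain ⟨b, -, rfl⟩ := List.mem_map.1 hm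
        exact Nat.factorial_pos b)
      (card_fiberCards_eq_blocks_mul_prod_factorial c).symm
  rw [hsurj, sum_congr rfl hterm, sum_const, nsmul_eq_mul, hcard]

end Compositions

section FiberPartition

variable {α ι : Type*} [Fintype α] [DecidableEq ι]

theorem injective_fiber_of_surjective {f : α → ι} (hf : Function.Surjective f) :
    Function.Injective fun i => ({a | f a = i} : Finset α) := by
  intro i j hij
  obtain ⟨a, rfl⟩ := hf i
  have ha : a ∈ ({b | f b = f a} : Finset α) := by simp
  simpa [hij] using ha

variable [DecidableEq α] [Fintype ι]

def fiberPartition (f : α → ι) : Finpartition (univ : Finset α) :=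
  Finpartition.ofSetoid (Setoid.ker f)

theorem parts_fiberPartition {f : α → ι} (hf : Function.Surjective f) :
    (fiberPartition f).parts = univ.image fun i => ({a | f a = i} : Finset α) := by
  rw [fiberPartition, Finpartition.ofSetoid, Finpartition.ofSetSetoid_parts,
    ← image_univ_of_surjective hf, image_image]
  congr 1
  funext a
  ext b
  simp [Setoid.ker_def, eq_comm]

theorem card_parts_fiberPartition {f : α → ι} (hf : Function.Surjective f) :
    #(fiberPartition f).parts = Fintype.card ι := by
  rw [parts_fiberPartition hf, card_image_of_injective _ (injective_fiber_of_surjective hf),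
    card_univ]

theorem prod_parts_fiberPartition {M : Type*} [CommMonoid M] (g : Finset α → M) {f : α → ι}
    (hf : Function.Surjective f) :
    ∏ B ∈ (fiberPartition f).parts, g B = ∏ i, g {a | f a = i} := by
  rw [parts_fiberPartition hf, prod_image fun i _ j _ h => injective_fiber_of_surjective hf h]

def toParts (π : Finpartition (univ : Finset α)) (a : α) : π.parts :=
  ⟨π.part a, π.part_mem.2 (mem_univ a)⟩

theorem toParts_surjective (π : Finpartition (univ : Finset α)) :
    Function.Surjective (toParts π) := by
  rintro ⟨B, hB⟩
  obtain ⟨a, ha⟩ := π.nonempty_of_mem_parts hB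
  exact ⟨a, Subtype.ext (π.part_eq_of_mem hB ha)⟩

theorem fiberPartition_equiv_comp_toParts (π : Finpartition (univ : Finset α))
    (e : π.parts ≃ ι) : fiberPartition (e ∘ toParts π) = π := by
  have hfiber (i : ι) : ({a | e (toParts π a) = i} : Finset α) = (e.symm i).1 := by
    ext a
    rw [mem_filter, ← Equiv.eq_symm_apply, toParts, Subtype.ext_iff,
      π.part_eq_iff_mem (e.symm i).2]
    simp
  ext B
  simp only [parts_fiberPartition (e.surjective.comp (toParts_surjective π)),
    Function.comp_apply, hfiber, mem_image, mem_univ, true_and]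
  exact ⟨fun ⟨i, hi⟩ => hi ▸ (e.symm i).2, fun hB => ⟨e ⟨B, hB⟩, by simp⟩⟩

theorem exists_equiv_comp_toParts_eq {f : α → ι} (hf : Function.Surjective f) :
    ∃ e : (fiberPartition f).parts ≃ ι, e ∘ toParts (fiberPartition f) = f := by
  let fiberPart : ι → (fiberPartition f).parts := fun i =>
    ⟨({a | f a = i} : Finset α), by
      rw [parts_fiberPartition hf]
      exact mem_image_of_mem _ (mem_univ i)⟩
  have hbij : Function.Bijective fiberPart :=
    (Fintype.bijective_iff_injective_and_card fiberPart).2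
      ⟨fun i j h => injective_fiber_of_surjective hf (congrArg Subtype.val h),
        by simp [card_parts_fiberPartition hf]⟩
  refine ⟨(Equiv.ofBijective fiberPart hbij).symm, funext fun a => ?_⟩
  rw [Function.comp_apply, Equiv.symm_apply_eq]
  exact Subtype.ext
    ((fiberPartition f).part_eq_of_mem (fiberPart (f a)).2 (by simp [fiberPart]))

theorem card_surjective_fiberPartition_eq (π : Finpartition (univ : Finset α))
    (hπ : #π.parts = Fintype.card ι) :
    #(univ.filter fun f : α → ι => Function.Surjective f ∧ fiberPartition f = π) =
      (Fintype.card ι)! := by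
  have himage : (univ.filter fun f : α → ι => Function.Surjective f ∧ fiberPartition f = π) =
      univ.image fun e : π.parts ≃ ι => e ∘ toParts π := by
    ext f
    simp only [mem_filter, mem_univ, true_and, mem_image]
    constructor
    · rintro ⟨hf, rfl⟩
      exact exists_equiv_comp_toParts_eq hf
    · rintro ⟨e, rfl⟩
      exact ⟨e.surjective.comp (toParts_surjective π), fiberPartition_equiv_comp_toParts π e⟩
  have hinj : Function.Injective fun e : π.parts ≃ ι => e ∘ toParts π := fun e e' h =>
    Equiv.coe_fn_injective ((toParts_surjective π).injective_comp_right h)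
  rw [himage, card_image_of_injective _ hinj, card_univ,
    Fintype.card_equiv (Fintype.equivOfCardEq (by simp [hπ])), Fintype.card_coe, hπ]

theorem sum_surjective_eq_factorial_mul_sum_finpartition {R : Type*} [CommSemiring R]
    (x : ℕ → R) :
    ∑ f ∈ univ.filter (fun f : α → ι => Function.Surjective f), ∏ i, x #{a | f a = i} =
      (Fintype.card ι)! * ∑ π ∈ univ.filter
          (fun π : Finpartition (univ : Finset α) => #π.parts = Fintype.card ι),
        ∏ B ∈ π.parts, x #B := by
  have hmaps : ∀ f ∈ univ.filter (fun f : α → ι => Function.Surjective f),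
      fiberPartition f ∈ univ.filter
        (fun π : Finpartition (univ : Finset α) => #π.parts = Fintype.card ι) :=
    fun f hf => mem_filter.2 ⟨mem_univ _, card_parts_fiberPartition (mem_filter.1 hf).2⟩
  rw [← sum_fiberwise_of_maps_to hmaps, mul_sum]
  refine sum_congr rfl fun π hπ => ?_
  have hterm : ∀ f ∈ univ.filter fun f : α → ι => Function.Surjective f ∧ fiberPartition f = π,
      ∏ i, x #{a | f a = i} = ∏ B ∈ π.parts, x #B := by
    intro f hf
    obtain ⟨hsurj, rfl⟩ := (mem_filter.1 hf).2
    exact (prod_parts_fiberPartition (fun B => x #B) hsurj).symm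
  rw [filter_filter, sum_congr rfl hterm, sum_const,
    card_surjective_fiberPartition_eq π (mem_filter.1 hπ).2, nsmul_eq_mul]

end FiberPartition

/-- The composition-indexed (ordered) expansion equals `k!` times the partition-indexed
(unordered) one: for any `x : ℕ → R`,
`Σ_{c ⊨ n, length c = k} (n!/(c₁!⋯c_k!)) · x(c₁)⋯x(c_k)
  = k! · Σ_{π ⊢ Fin n, #blocks π = k} ∏_{B ∈ π} x(card B)`. -/
theorem compositions_eq_factorial_mul_partitions {R : Type*} [CommRing R] (x : ℕ → R)
    (n k : ℕ) :
    ∑ c ∈ Finset.univ.filter (fun c : Composition n => c.length = k),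
        ((n.factorial / (c.blocks.map Nat.factorial).prod : ℕ) : R) *
          (c.blocks.map x).prod =
      (k.factorial : R) *
        ∑ π ∈ Finset.univ.filter
            (fun π : Finpartition (Finset.univ : Finset (Fin n)) => π.parts.card = k),
          ∏ B ∈ π.parts, x B.card := by
  rw [sum_compositions_eq_sum_surjective, sum_surjective_eq_factorial_mul_sum_finpartition,
    Fintype.card_fin]
end
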